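/- arXiv:2304.14166 — 2 statements merged into one kernel-verified Lean document; each statement's English description precedes it below -/
import Mathlib

section
/- Strong converse with shared randomness: Define ψ_t(V‖V̄|P_X) := log Σ_x P_X(x) Σ_y V(y|x)^{1−t} V̄(y|x)^t and φ*_sh(t) := sup_{P_X} min_{V ∈ conv(W), V̄ ∈ conv(W̄)} ψ_t(V‖V̄|P_X). Assume the minimax-limit exchange lim_{t→0^−} φ*_sh(t)/(−t) = sup_{P_X} min_{V ∈ conv(W), V̄ ∈ conv(W̄)} lim_{t→0^−} ψ_t(V‖V̄|P_X)/(−t), so that this limit equals D*_sh := sup_{P_X} min_{V,V̄} D(V‖V̄|P_X). Then for any sequence of blocklength-n shared-randomness schemes whose type-2 errors satisfy liminf_{n→∞} −(1/n) log β_n > D*_sh, the type-1 errors satisfy liminf_{n→∞} −(1/n) log(1−α_n) > 0; i.e., the probability of correct decision under H0 decays exponentially. -/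
open Finset

/-- `p` is a probability mass function. -/
def IsDist {Z : Type*} [Fintype Z] (p : Z → ℝ) : Prop :=
  (∀ z, 0 ≤ p z) ∧ ∑ z, p z = 1

/-- The prefix of length `i` of the word `z`. -/
def pre {Z : Type*} {n : ℕ} (z : Fin n → Z) (i : Fin n) : Fin i.val → Z :=
  fun j => z (Fin.castLE i.isLt.le j)

/-- Conditional KL divergence `D(V‖V̄|P_X)` between channels from `X` to `Y`. -/
noncomputable def condKL {X Y : Type*} [Fintype X] [Fintype Y]
    (V Vb : X → Y → ℝ) (pX : X → ℝ) : ℝ :=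
  ∑ x, pX x * ∑ y, V x y * Real.log (V x y / Vb x y)

/-- `ψ_t(V‖V̄|P_X) = log Σ_x P_X(x) Σ_y V(y|x)^{1-t} V̄(y|x)^t`. -/
noncomputable def psiT {X Y : Type*} [Fintype X] [Fintype Y]
    (t : ℝ) (V Vb : X → Y → ℝ) (pX : X → ℝ) : ℝ :=
  Real.log (∑ x, pX x * ∑ y, (V x y) ^ (1 - t) * (Vb x y) ^ t)

/-- The channel obtained by mixing the state of `W` according to `pS`. -/
noncomputable def mix {X Y S : Type*} [Fintype S] (W : X → S → Y → ℝ) (pS : S → ℝ) :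
    X → Y → ℝ :=
  fun x y => ∑ s, pS s * W x s y

/-- `D*_sh = sup_{P_X} min_{V ∈ conv(W), V̄ ∈ conv(W̄)} D(V‖V̄|P_X)`. -/
noncomputable def Dsh {X Y S Sb : Type*} [Fintype X] [Fintype Y] [Fintype S] [Fintype Sb]
    (W : X → S → Y → ℝ) (Wb : X → Sb → Y → ℝ) : ℝ :=
  ⨆ pX : {p : X → ℝ // IsDist p},
    sInf {d | ∃ pS : S → ℝ, IsDist pS ∧ ∃ pSb : Sb → ℝ, IsDist pSb ∧
      d = condKL (mix W pS) (mix Wb pSb) pX.1}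

/-- `φ*_sh(t) = sup_{P_X} min_{V ∈ conv(W), V̄ ∈ conv(W̄)} ψ_t(V‖V̄|P_X)`. -/
noncomputable def phiStarSh {X Y S Sb : Type*} [Fintype X] [Fintype Y] [Fintype S]
    [Fintype Sb] (W : X → S → Y → ℝ) (Wb : X → Sb → Y → ℝ) (t : ℝ) : ℝ :=
  ⨆ pX : {p : X → ℝ // IsDist p},
    sInf {v | ∃ pS : S → ℝ, IsDist pS ∧ ∃ pSb : Sb → ℝ, IsDist pSb ∧
      v = psiT t (mix W pS) (mix Wb pSb) pX.1}

/-- A blocklength-`n` scheme with shared randomness `U`: the (possibly adaptive)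
transmitter maps `U` and past outputs to the next input, and the detector decides the
hypothesis from `(U, X^n, Y^n)` (`true` means deciding `H1`). -/
structure SRScheme (X Y : Type) (n : ℕ) where
  U : Type
  [fintU : Fintype U]
  pU : U → ℝ
  pU_nonneg : ∀ u, 0 ≤ pU u
  pU_sum : ∑ u, pU u = 1
  enc : U → (i : Fin n) → (Fin i.val → Y) → X
  dec : U → (Fin n → X) → (Fin n → Y) → Bool

attribute [instance] SRScheme.fintU

/-- An adaptive (randomized) adversary strategy: a distribution on states given the time
index and past outputs. -/
def AdvStrat (Y S : Type) (n : ℕ) := (i : Fin n) → (Fin i.val → Y) → S → ℝ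

def ValidAdv {Y S : Type} [Fintype S] {n : ℕ} (a : AdvStrat Y S n) : Prop :=
  ∀ i h, IsDist (a i h)

/-- The inputs induced by shared randomness `u` and output sequence `y`. -/
def inducedInputs {X Y : Type} {n : ℕ} (sc : SRScheme X Y n) (u : sc.U)
    (y : Fin n → Y) : Fin n → X :=
  fun i => sc.enc u i (pre y i)

/-- Joint probability of `(u, y^n)` when the transmitter uses scheme `sc`, the channel
family is `W`, and the adversary plays the adaptive strategy `a`. -/
noncomputable def jointProb {X Y S : Type} [Fintype S] {n : ℕ}
    (sc : SRScheme X Y n) (W : X → S → Y → ℝ) (a : AdvStrat Y S n)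
    (u : sc.U) (y : Fin n → Y) : ℝ :=
  sc.pU u * ∏ i : Fin n, ∑ s, a i (pre y i) s * W (sc.enc u i (pre y i)) s (y i)

/-- Worst-case (over adaptive adversaries) probability that the detector declares `H1`
under hypothesis `H0` (type-1 error). -/
noncomputable def alphaSh {X Y S : Type} [Fintype Y] [Fintype S] {n : ℕ}
    (sc : SRScheme X Y n) (W : X → S → Y → ℝ) : ℝ :=
  ⨆ a : {a : AdvStrat Y S n // ValidAdv a},
    ∑ u, ∑ y : Fin n → Y,
      jointProb sc W a.1 u y * (if sc.dec u (inducedInputs sc u y) y = true then 1 else 0)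

/-- Worst-case (over adaptive adversaries) probability that the detector declares `H0`
under hypothesis `H1` (type-2 error). -/
noncomputable def betaSh {X Y Sb : Type} [Fintype Y] [Fintype Sb] {n : ℕ}
    (sc : SRScheme X Y n) (Wb : X → Sb → Y → ℝ) : ℝ :=
  ⨆ a : {a : AdvStrat Y Sb n // ValidAdv a},
    ∑ u, ∑ y : Fin n → Y,
      jointProb sc Wb a.1 u y * (if sc.dec u (inducedInputs sc u y) y = false then 1 else 0)

/-!
Fix `t < 0` and `B` with `φ*_sh(t) / (-t) < B < liminf -(1/n) log β_n`. Against any scheme, let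
the two adversaries play, step by step, state mixtures that nearly attain the inner minimum of
`φ*_sh(t)` for the current tilted distribution of the input letter. The joint laws `P` (under `H0`)
and `Q` (under `H1`) they induce then satisfy `∑ P ^ (1 - t) * Q ^ t ≤ exp (n (φ*_sh(t) + η))`
for any prescribed `η > 0`, and Hölder's inequality with exponents `1 - t` and `(1 - t) / (-t)`
on the region where the detector decides `H0` gives
`1 - α_n ≤ (∑ P ^ (1 - t) * Q ^ t) ^ (1 / (1 - t)) * β_n ^ (-t / (1 - t)) ≤ exp (-n c)`
with `c > 0`. The crude bound `ρ ^ n * β_n ≤ 1 - α_n`, from the positivity of all channel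
entries, keeps the exponent of `1 - α_n` bounded, so that its `liminf` is not a junk value.
-/

open Real Filter

section Distributions

variable {Z : Type*} [Fintype Z] {p : Z → ℝ}

theorem isDist_uniform [Nonempty Z] : IsDist (fun _ : Z => (Fintype.card Z : ℝ)⁻¹) := by
  refine ⟨fun _ => by positivity, ?_⟩
  simp

theorem isDist_div_sum (h0 : ∀ z, 0 ≤ p z) (hs : 0 < ∑ z, p z) :
    IsDist (fun z => p z / ∑ z', p z') :=
  ⟨fun z => div_nonneg (h0 z) hs.le, by rw [← Finset.sum_div, div_self hs.ne']⟩

theorem IsDist.exists_pos (hp : IsDist p) : ∃ z, 0 < p z := by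
  by_contra! h
  have : ∑ z, p z ≤ 0 := Finset.sum_nonpos fun z _ => h z
  linarith [hp.2]

theorem IsDist.le_one (hp : IsDist p) (z : Z) : p z ≤ 1 :=
  hp.2 ▸ Finset.single_le_sum (fun z _ => hp.1 z) (Finset.mem_univ z)

theorem IsDist.sum_mul_le {f : Z → ℝ} {c : ℝ} (hp : IsDist p) (hf : ∀ z, f z ≤ c) :
    ∑ z, p z * f z ≤ c :=
  calc ∑ z, p z * f z ≤ ∑ z, p z * c :=
        Finset.sum_le_sum fun z _ => mul_le_mul_of_nonneg_left (hf z) (hp.1 z)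
    _ = c := by rw [← Finset.sum_mul, hp.2, one_mul]

theorem IsDist.le_sum_mul {f : Z → ℝ} {c : ℝ} (hp : IsDist p) (hf : ∀ z, c ≤ f z) :
    c ≤ ∑ z, p z * f z :=
  calc c = ∑ z, p z * c := by rw [← Finset.sum_mul, hp.2, one_mul]
    _ ≤ ∑ z, p z * f z :=
        Finset.sum_le_sum fun z _ => mul_le_mul_of_nonneg_left (hf z) (hp.1 z)

theorem IsDist.sum_mul_log_div_nonneg {q : Z → ℝ} (hp : IsDist p) (hq : IsDist q)
    (hqpos : ∀ z, 0 < q z) : 0 ≤ ∑ z, p z * log (p z / q z) := by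
  have hterm : ∀ z, p z - q z ≤ p z * log (p z / q z) := by
    intro z
    rcases (hp.1 z).eq_or_lt with hz | hz
    · simp [← hz, (hqpos z).le]
    · have := one_sub_inv_le_log_of_pos (div_pos hz (hqpos z))
      rw [inv_div] at this
      calc p z - q z = p z * (1 - q z / p z) := by field_simp
        _ ≤ _ := mul_le_mul_of_nonneg_left this hz.le
  calc (0 : ℝ) = ∑ z, (p z - q z) := by rw [Finset.sum_sub_distrib, hp.2, hq.2, sub_self]
    _ ≤ _ := Finset.sum_le_sum fun z _ => hterm z

end Distributions

section Mixtures

variable {X Y S : Type*} [Fintype S] {W : X → S → Y → ℝ} {pS : S → ℝ}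

theorem mix_nonneg (hW : ∀ x s y, 0 ≤ W x s y) (hpS : IsDist pS) (x : X) (y : Y) :
    0 ≤ mix W pS x y :=
  Finset.sum_nonneg fun s _ => mul_nonneg (hpS.1 s) (hW x s y)

theorem mix_pos (hW : ∀ x s y, 0 < W x s y) (hpS : IsDist pS) (x : X) (y : Y) :
    0 < mix W pS x y := by
  obtain ⟨s, hs⟩ := hpS.exists_pos
  exact Finset.sum_pos' (fun s _ => mul_nonneg (hpS.1 s) (hW x s y).le)
    ⟨s, Finset.mem_univ s, mul_pos hs (hW x s y)⟩

theorem mix_isDist [Fintype Y] (hW : ∀ x s, IsDist (W x s)) (hpS : IsDist pS) (x : X) :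
    IsDist (mix W pS x) := by
  refine ⟨mix_nonneg (fun x s => (hW x s).1) hpS x, ?_⟩
  simp only [mix]
  rw [Finset.sum_comm]
  simp only [← Finset.mul_sum, (hW x _).2, mul_one, hpS.2]

end Mixtures

theorem condKL_nonneg {X Y : Type*} [Fintype X] [Fintype Y] {V Vb : X → Y → ℝ} {pX : X → ℝ}
    (hpX : IsDist pX) (hV : ∀ x, IsDist (V x)) (hVb : ∀ x, IsDist (Vb x))
    (hVbpos : ∀ x y, 0 < Vb x y) : 0 ≤ condKL V Vb pX :=
  Finset.sum_nonneg fun x _ =>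
    mul_nonneg (hpX.1 x) ((hV x).sum_mul_log_div_nonneg (hVb x) (hVbpos x))

theorem Dsh_nonneg {X Y S Sb : Type*} [Fintype X] [Fintype Y] [Fintype S] [Fintype Sb]
    {W : X → S → Y → ℝ} {Wb : X → Sb → Y → ℝ} (hW : ∀ x s, IsDist (W x s))
    (hWb : ∀ x s, IsDist (Wb x s)) (hWbpos : ∀ x s y, 0 < Wb x s y) : 0 ≤ Dsh W Wb := by
  refine Real.iSup_nonneg fun pX => Real.sInf_nonneg ?_
  rintro d ⟨pS, hpS, pSb, hpSb, rfl⟩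
  exact condKL_nonneg pX.2 (mix_isDist hW hpS) (mix_isDist hWb hpSb) (mix_pos hWbpos hpSb)

section Words

variable {Y : Type*}

theorem sum_fin_succ_pi [Fintype Y] (n : ℕ) (g : (Fin (n + 1) → Y) → ℝ) :
    ∑ y, g y = ∑ h : Fin n → Y, ∑ l, g (Fin.snoc h l) := by
  rw [← (Fin.snocEquiv fun _ => Y).sum_comp, Fintype.sum_prod_type, Finset.sum_comm]
  rfl

theorem pre_castSucc {n : ℕ} (y : Fin (n + 1) → Y) (j : Fin n) :
    pre y j.castSucc = pre (Fin.init y) j :=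
  rfl

theorem pre_last {n : ℕ} (y : Fin (n + 1) → Y) : pre y (Fin.last n) = Fin.init y :=
  rfl

theorem sum_prod_kernel_eq_one [Fintype Y] : ∀ (n : ℕ) (F : (i : Fin n) → (Fin i → Y) → Y → ℝ),
    (∀ i h, ∑ l, F i h l = 1) → ∑ y : Fin n → Y, ∏ i, F i (pre y i) (y i) = 1
  | 0, _, _ => by simp
  | n + 1, F, hF => by
    rw [sum_fin_succ_pi]
    simp only [Fin.prod_univ_castSucc, pre_castSucc, pre_last, Fin.init_snoc, Fin.snoc_castSucc,
      Fin.snoc_last, ← Finset.mul_sum, hF, mul_one]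
    exact sum_prod_kernel_eq_one n _ fun i h => hF i.castSucc h

theorem sum_pi_le_pow_mul [Fintype Y] (G : (i : ℕ) → (Fin i → Y) → ℝ) {E : ℝ} (hE : 0 ≤ E) :
    ∀ n : ℕ, (∀ i < n, ∀ h, ∑ l, G (i + 1) (Fin.snoc h l) ≤ E * G i h) →
      ∑ y, G n y ≤ E ^ n * G 0 Fin.elim0
  | 0, _ => by simp [Subsingleton.elim _ (Fin.elim0 : Fin 0 → Y)]
  | n + 1, hG => by
    rw [sum_fin_succ_pi]
    calc ∑ h : Fin n → Y, ∑ l, G (n + 1) (Fin.snoc h l) ≤ ∑ h, E * G n h :=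
          Finset.sum_le_sum fun h _ => hG n n.lt_succ_self h
      _ = E * ∑ h, G n h := (Finset.mul_sum ..).symm
      _ ≤ E * (E ^ n * G 0 Fin.elim0) := mul_le_mul_of_nonneg_left
          (sum_pi_le_pow_mul G hE n fun i hi => hG i (hi.trans n.lt_succ_self)) hE
      _ = E ^ (n + 1) * G 0 Fin.elim0 := by ring

end Words

section Decisions

variable {X Y S Sb : Type} [Fintype S] [Fintype Sb] {n : ℕ}

instance [Nonempty S] : Nonempty {a : AdvStrat Y S n // ValidAdv a} :=
  ⟨⟨fun _ _ _ => _, fun _ _ => isDist_uniform⟩⟩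

/- `alphaSh sc W` and `betaSh sc Wb` are, definitionally, the suprema over valid adversaries of
`decisionProb sc W · true` and `decisionProb sc Wb · false`. -/
noncomputable def decisionProb [Fintype Y] (sc : SRScheme X Y n) (W : X → S → Y → ℝ)
    (a : AdvStrat Y S n) (b : Bool) : ℝ :=
  ∑ u, ∑ y : Fin n → Y,
    jointProb sc W a u y * if sc.dec u (inducedInputs sc u y) y = b then 1 else 0

variable {sc : SRScheme X Y n} {W : X → S → Y → ℝ} {a : AdvStrat Y S n}

theorem jointProb_eq (u : sc.U) (y : Fin n → Y) :
    jointProb sc W a u y = sc.pU u * ∏ i, mix W (a i (pre y i)) (sc.enc u i (pre y i)) (y i) :=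
  rfl

theorem jointProb_nonneg (hW : ∀ x s y, 0 ≤ W x s y) (ha : ValidAdv a) (u : sc.U)
    (y : Fin n → Y) : 0 ≤ jointProb sc W a u y :=
  mul_nonneg (sc.pU_nonneg u) (Finset.prod_nonneg fun i _ => mix_nonneg hW (ha i _) _ _)

theorem jointProb_eq_zero_iff (hW : ∀ x s y, 0 < W x s y) (ha : ValidAdv a) (u : sc.U)
    (y : Fin n → Y) : jointProb sc W a u y = 0 ↔ sc.pU u = 0 := by
  refine mul_eq_zero.trans (or_iff_left (Finset.prod_pos fun i _ => ?_).ne')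
  exact mix_pos hW (ha i _) _ _

theorem pow_mul_jointProb_le {Wb : X → Sb → Y → ℝ} {ab : AdvStrat Y Sb n} {ρ : ℝ}
    (hρ : 0 ≤ ρ) (hWb : ∀ x s y, 0 ≤ Wb x s y) (hWWb : ∀ x s s' y, ρ * Wb x s' y ≤ W x s y)
    (ha : ValidAdv a) (hab : ValidAdv ab) (u : sc.U) (y : Fin n → Y) :
    ρ ^ n * jointProb sc Wb ab u y ≤ jointProb sc W a u y := by
  have hmix : ∀ (pS : S → ℝ) (pSb : Sb → ℝ), IsDist pS → IsDist pSb → ∀ x y,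
      ρ * mix Wb pSb x y ≤ mix W pS x y := fun pS pSb hpS hpSb x y => by
    rw [mix, Finset.mul_sum]
    simp only [mul_left_comm ρ]
    exact hpSb.sum_mul_le fun s' => hpS.le_sum_mul fun s => hWWb x s s' y
  rw [jointProb, jointProb, mul_left_comm, ← Fin.prod_const, ← Finset.prod_mul_distrib]
  refine mul_le_mul_of_nonneg_left (Finset.prod_le_prod (fun i _ => ?_) fun i _ => ?_)
    (sc.pU_nonneg u)
  · exact mul_nonneg hρ (mix_nonneg hWb (hab i _) _ _)
  · exact hmix _ _ (ha i _) (hab i _) _ _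

variable [Fintype Y]

theorem sum_jointProb (hW : ∀ x s, IsDist (W x s)) (ha : ValidAdv a) :
    ∑ u, ∑ y : Fin n → Y, jointProb sc W a u y = 1 := by
  have hkernel : ∀ u, ∑ y : Fin n → Y,
      ∏ i, mix W (a i (pre y i)) (sc.enc u i (pre y i)) (y i) = 1 := fun u =>
    sum_prod_kernel_eq_one n _ fun i h => (mix_isDist hW (ha i h) _).2
  calc ∑ u, ∑ y : Fin n → Y, jointProb sc W a u y
      = ∑ u, sc.pU u * ∑ y : Fin n → Y,
          ∏ i, mix W (a i (pre y i)) (sc.enc u i (pre y i)) (y i) := by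
        simp only [Finset.mul_sum]
        rfl
    _ = 1 := by simp only [hkernel, mul_one, sc.pU_sum]

theorem decisionProb_nonneg (hW : ∀ x s y, 0 ≤ W x s y) (ha : ValidAdv a) (b : Bool) :
    0 ≤ decisionProb sc W a b :=
  Finset.sum_nonneg fun u _ => Finset.sum_nonneg fun y _ =>
    mul_nonneg (jointProb_nonneg hW ha u y) (by split_ifs <;> norm_num)

theorem decisionProb_true_add_false (hW : ∀ x s, IsDist (W x s)) (ha : ValidAdv a) :
    decisionProb sc W a true + decisionProb sc W a false = 1 := by
  rw [← sum_jointProb hW ha, decisionProb, decisionProb, ← Finset.sum_add_distrib]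
  refine Finset.sum_congr rfl fun u _ => ?_
  rw [← Finset.sum_add_distrib]
  refine Finset.sum_congr rfl fun y _ => ?_
  cases sc.dec u (inducedInputs sc u y) y <;> simp

theorem decisionProb_le_one (hW : ∀ x s, IsDist (W x s)) (ha : ValidAdv a) (b : Bool) :
    decisionProb sc W a b ≤ 1 := by
  have h0 := decisionProb_nonneg (sc := sc) (fun x s => (hW x s).1) ha
  have := decisionProb_true_add_false (sc := sc) hW ha
  cases b <;> linarith [h0 true, h0 false]

theorem decisionProb_le_iSup (hW : ∀ x s, IsDist (W x s)) (ha : ValidAdv a) (b : Bool) :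
    decisionProb sc W a b ≤ ⨆ a' : {a : AdvStrat Y S n // ValidAdv a}, decisionProb sc W a'.1 b :=
  le_ciSup (f := fun a' : {a : AdvStrat Y S n // ValidAdv a} => decisionProb sc W a'.1 b)
    ⟨1, by rintro _ ⟨a', rfl⟩; exact decisionProb_le_one hW a'.2 b⟩ ⟨a, ha⟩

theorem one_sub_alphaSh_le_decisionProb (hW : ∀ x s, IsDist (W x s)) (ha : ValidAdv a) :
    1 - alphaSh sc W ≤ decisionProb sc W a false := by
  have : decisionProb sc W a true ≤ alphaSh sc W := decisionProb_le_iSup hW ha true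
  linarith [decisionProb_true_add_false (sc := sc) hW ha]

theorem betaSh_nonneg {Wb : X → Sb → Y → ℝ} (hWb : ∀ x s, IsDist (Wb x s)) :
    0 ≤ betaSh sc Wb :=
  Real.iSup_nonneg fun a => decisionProb_nonneg (fun x s => (hWb x s).1) a.2 false

theorem betaSh_le_one [Nonempty Sb] {Wb : X → Sb → Y → ℝ} (hWb : ∀ x s, IsDist (Wb x s)) :
    betaSh sc Wb ≤ 1 :=
  ciSup_le fun a => decisionProb_le_one hWb a.2 false

theorem mul_decisionProb_le {Wb : X → Sb → Y → ℝ} {ab : AdvStrat Y Sb n} {c : ℝ}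
    (h : ∀ u y, c * jointProb sc Wb ab u y ≤ jointProb sc W a u y) (b : Bool) :
    c * decisionProb sc Wb ab b ≤ decisionProb sc W a b := by
  simp only [decisionProb, Finset.mul_sum, ← mul_assoc]
  exact Finset.sum_le_sum fun u _ => Finset.sum_le_sum fun y _ =>
    mul_le_mul_of_nonneg_right (h u y) (by split_ifs <;> norm_num)

end Decisions

theorem exists_pow_mul_betaSh_le_one_sub_alphaSh {X Y S Sb : Type} [Fintype X] [Fintype Y]
    [Fintype S] [Fintype Sb] [Nonempty X] [Nonempty Y] [Nonempty S] [Nonempty Sb]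
    {W : X → S → Y → ℝ} {Wb : X → Sb → Y → ℝ} (hW : ∀ x s, IsDist (W x s))
    (hWpos : ∀ x s y, 0 < W x s y) (hWbpos : ∀ x s y, 0 < Wb x s y) :
    ∃ ρ > 0, ∀ n (sc : SRScheme X Y n), ρ ^ n * betaSh sc Wb ≤ 1 - alphaSh sc W := by
  obtain ⟨⟨x₀, s₀, s₀', y₀⟩, hmin⟩ :=
    Finite.exists_min fun i : X × S × Sb × Y => W i.1 i.2.1 i.2.2.2 / Wb i.1 i.2.2.1 i.2.2.2
  set ρ := W x₀ s₀ y₀ / Wb x₀ s₀' y₀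
  have hρ : 0 < ρ := div_pos (hWpos _ _ _) (hWbpos _ _ _)
  have hWWb : ∀ x s s' y, ρ * Wb x s' y ≤ W x s y := fun x s s' y =>
    (le_div_iff₀ (hWbpos x s' y)).1 (hmin (x, s, s', y))
  refine ⟨ρ, hρ, fun n sc => ?_⟩
  suffices alphaSh sc W ≤ 1 - ρ ^ n * betaSh sc Wb by linarith
  refine ciSup_le fun a => show decisionProb sc W a.1 true ≤ _ from ?_
  have : ρ ^ n * betaSh sc Wb ≤ decisionProb sc W a.1 false := by
    rw [betaSh, Real.mul_iSup_of_nonneg (by positivity)]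
    exact ciSup_le fun ab => mul_decisionProb_le (pow_mul_jointProb_le hρ.le
      (fun x s y => (hWbpos x s y).le) hWWb a.2 ab.2) false
  linarith [decisionProb_true_add_false (sc := sc) hW a.2]

theorem sum_le_rpow_mul_rpow_of_neg {ι : Type*} (s : Finset ι) {t : ℝ} (ht : t < 0)
    {p q : ι → ℝ} (hp : ∀ i, 0 ≤ p i) (hq : ∀ i, 0 ≤ q i) (hpq : ∀ i, q i = 0 → p i = 0) :
    ∑ i ∈ s, p i ≤
      (∑ i ∈ s, p i ^ (1 - t) * q i ^ t) ^ (1 - t)⁻¹ * (∑ i ∈ s, q i) ^ (-t / (1 - t)) := by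
  have hterm : ∀ i, q i * (p i / q i) = p i ∧
      q i * (p i / q i) ^ (1 - t) = p i ^ (1 - t) * q i ^ t := by
    intro i
    rcases (hq i).eq_or_lt with hqi | hqi
    · simp [← hqi, hpq i hqi.symm, Real.zero_rpow ht.ne, Real.zero_rpow (by linarith : 1 - t ≠ 0)]
    · refine ⟨mul_div_cancel₀ _ hqi.ne', ?_⟩
      rw [Real.div_rpow (hp i) hqi.le, Real.rpow_sub hqi, Real.rpow_one]
      field_simp
  have := inner_le_weight_mul_Lp_of_nonneg s (p := 1 - t) (by linarith) q (fun i => p i / q i)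
    hq fun i => div_nonneg (hp i) (hq i)
  simp only [hterm] at this
  have h1t : 1 - t ≠ 0 := by linarith
  rwa [mul_comm, show 1 - (1 - t)⁻¹ = -t / (1 - t) by field_simp; ring] at this

noncomputable def tiltedMass {X Y : Type*} [Fintype Y] (t : ℝ) (V Vb : X → Y → ℝ) (x : X) : ℝ :=
  ∑ y, V x y ^ (1 - t) * Vb x y ^ t

theorem sum_fiber_mul {U X : Type*} [Fintype U] [Fintype X] [DecidableEq X] (f : U → X)
    (w : U → ℝ) (F : X → ℝ) :
    ∑ x, (∑ u, if f u = x then w u else 0) * F x = ∑ u, w u * F (f u) := by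
  simp only [Finset.sum_mul, ite_mul, zero_mul]
  rw [Finset.sum_comm]
  simp

theorem mul_rpow_one_sub_mul_mul_rpow {c a b t : ℝ} (hc : 0 ≤ c) (ha : 0 ≤ a) (hb : 0 ≤ b)
    (ht : t ≠ 1) : (c * a) ^ (1 - t) * (c * b) ^ t = c * (a ^ (1 - t) * b ^ t) := by
  rcases hc.eq_or_lt with rfl | hc
  · simp [Real.zero_rpow (sub_ne_zero.2 ht.symm)]
  rw [Real.mul_rpow hc.le ha, Real.mul_rpow hc.le hb, mul_mul_mul_comm, ← Real.rpow_add hc,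
    sub_add_cancel, Real.rpow_one]

section TiltedAdversary

variable {X Y S Sb : Type} [DecidableEq X] [Fintype S] [Fintype Sb] {n : ℕ} (sc : SRScheme X Y n)
  (W : X → S → Y → ℝ) (Wb : X → Sb → Y → ℝ) (t : ℝ) (mS : (X → ℝ) → S → ℝ)
  (mSb : (X → ℝ) → Sb → ℝ)

/- Weights and adversaries are built by one recursion: at step `i` the adversaries play the
mixtures that `mS`, `mSb` assign to the input-letter marginal `tiltedInput i h` of the weights of
step `i`. -/
noncomputable def tiltedWeight : (i : ℕ) → sc.U → (Fin i → Y) → ℝ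
  | 0, u, _ => sc.pU u
  | i + 1, u, y =>
    if hi : i < n then
      let h := Fin.init y
      let p : X → ℝ := fun x =>
        ∑ u', if sc.enc u' ⟨i, hi⟩ h = x then tiltedWeight i u' h else 0
      tiltedWeight i u h * (mix W (mS p) (sc.enc u ⟨i, hi⟩ h) (y (Fin.last i)) ^ (1 - t) *
        mix Wb (mSb p) (sc.enc u ⟨i, hi⟩ h) (y (Fin.last i)) ^ t)
    else 0

noncomputable def tiltedInput (i : Fin n) (h : Fin i → Y) (x : X) : ℝ :=
  ∑ u, if sc.enc u i h = x then tiltedWeight sc W Wb t mS mSb i u h else 0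

noncomputable def tiltedAdv : AdvStrat Y S n := fun i h => mS (tiltedInput sc W Wb t mS mSb i h)

noncomputable def tiltedAdvBar : AdvStrat Y Sb n := fun i h =>
  mSb (tiltedInput sc W Wb t mS mSb i h)

noncomputable def tiltFactor (i : Fin n) (h : Fin i → Y) (u : sc.U) (l : Y) : ℝ :=
  mix W (tiltedAdv sc W Wb t mS mSb i h) (sc.enc u i h) l ^ (1 - t) *
    mix Wb (tiltedAdvBar sc W Wb t mS mSb i h) (sc.enc u i h) l ^ t

theorem tiltedWeight_succ {i : ℕ} (hi : i < n) (u : sc.U) (y : Fin (i + 1) → Y) :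
    tiltedWeight sc W Wb t mS mSb (i + 1) u y =
      tiltedWeight sc W Wb t mS mSb i u (Fin.init y) *
        tiltFactor sc W Wb t mS mSb ⟨i, hi⟩ (Fin.init y) u (y (Fin.last i)) := by
  rw [tiltedWeight, dif_pos hi]
  rfl

variable {W Wb mS mSb}

theorem tiltFactor_nonneg (hW : ∀ x s y, 0 ≤ W x s y) (hWb : ∀ x s y, 0 ≤ Wb x s y)
    (hmS : ∀ p, IsDist (mS p)) (hmSb : ∀ p, IsDist (mSb p)) (i : Fin n) (h : Fin i → Y)
    (u : sc.U) (l : Y) : 0 ≤ tiltFactor sc W Wb t mS mSb i h u l :=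
  mul_nonneg (Real.rpow_nonneg (mix_nonneg hW (hmS _) _ _) _)
    (Real.rpow_nonneg (mix_nonneg hWb (hmSb _) _ _) _)

theorem tiltedWeight_nonneg (hW : ∀ x s y, 0 ≤ W x s y) (hWb : ∀ x s y, 0 ≤ Wb x s y)
    (hmS : ∀ p, IsDist (mS p)) (hmSb : ∀ p, IsDist (mSb p)) :
    ∀ i u h, 0 ≤ tiltedWeight sc W Wb t mS mSb i u h
  | 0, u, _ => sc.pU_nonneg u
  | i + 1, u, y => by
    by_cases hi : i < n
    · rw [tiltedWeight_succ sc W Wb t mS mSb hi]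
      exact mul_nonneg (tiltedWeight_nonneg hW hWb hmS hmSb i u _)
        (tiltFactor_nonneg sc t hW hWb hmS hmSb _ _ u _)
    · rw [tiltedWeight, dif_neg hi]

theorem tiltedWeight_eq_prod : ∀ (i : ℕ) (hi : i ≤ n) (u : sc.U) (h : Fin i → Y),
    tiltedWeight sc W Wb t mS mSb i u h =
      sc.pU u * ∏ j : Fin i, tiltFactor sc W Wb t mS mSb (Fin.castLE hi j) (pre h j) u (h j)
  | 0, _, u, h => by simp [tiltedWeight]
  | i + 1, hi, u, h => by
    rw [tiltedWeight_succ sc W Wb t mS mSb hi, tiltedWeight_eq_prod i (by omega),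
      Fin.prod_univ_castSucc, mul_assoc]
    rfl


theorem tiltedWeight_eq_jointProb (hW : ∀ x s y, 0 ≤ W x s y) (hWb : ∀ x s y, 0 ≤ Wb x s y)
    (hmS : ∀ p, IsDist (mS p)) (hmSb : ∀ p, IsDist (mSb p)) (ht : t ≠ 1) (u : sc.U)
    (y : Fin n → Y) :
    tiltedWeight sc W Wb t mS mSb n u y =
      jointProb sc W (tiltedAdv sc W Wb t mS mSb) u y ^ (1 - t) *
        jointProb sc Wb (tiltedAdvBar sc W Wb t mS mSb) u y ^ t := by
  have hA : ∀ i, 0 ≤ mix W (tiltedAdv sc W Wb t mS mSb i (pre y i)) (sc.enc u i (pre y i)) (y i) :=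
    fun i => mix_nonneg hW (hmS _) _ _
  have hB : ∀ i,
      0 ≤ mix Wb (tiltedAdvBar sc W Wb t mS mSb i (pre y i)) (sc.enc u i (pre y i)) (y i) :=
    fun i => mix_nonneg hWb (hmSb _) _ _
  rw [tiltedWeight_eq_prod sc t n le_rfl, jointProb_eq, jointProb_eq,
    mul_rpow_one_sub_mul_mul_rpow (sc.pU_nonneg u) (Finset.prod_nonneg fun i _ => hA i)
      (Finset.prod_nonneg fun i _ => hB i) ht,
    ← Real.finsetProd_rpow _ _ fun i _ => hA i, ← Real.finsetProd_rpow _ _ fun i _ => hB i,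
    ← Finset.prod_mul_distrib]
  rfl

theorem tiltedInput_nonneg (hW : ∀ x s y, 0 ≤ W x s y) (hWb : ∀ x s y, 0 ≤ Wb x s y)
    (hmS : ∀ p, IsDist (mS p)) (hmSb : ∀ p, IsDist (mSb p)) (i : Fin n) (h : Fin i → Y)
    (x : X) : 0 ≤ tiltedInput sc W Wb t mS mSb i h x :=
  Finset.sum_nonneg fun u _ => by
    split_ifs
    exacts [tiltedWeight_nonneg sc t hW hWb hmS hmSb i u h, le_rfl]

variable [Fintype X]

theorem sum_tiltedInput (i : Fin n) (h : Fin i → Y) :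
    ∑ x, tiltedInput sc W Wb t mS mSb i h x = ∑ u, tiltedWeight sc W Wb t mS mSb i u h := by
  have := sum_fiber_mul (fun u => sc.enc u i h)
    (fun u => tiltedWeight sc W Wb t mS mSb i u h) fun _ => (1 : ℝ)
  simp only [mul_one] at this
  exact this

variable [Fintype Y]

theorem sum_snoc_tiltedWeight_le (hW : ∀ x s y, 0 ≤ W x s y) (hWb : ∀ x s y, 0 ≤ Wb x s y)
    (hmS : ∀ p, IsDist (mS p)) (hmSb : ∀ p, IsDist (mSb p)) {E : ℝ}
    (hm : ∀ p : X → ℝ, (∀ x, 0 ≤ p x) →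
      ∑ x, p x * tiltedMass t (mix W (mS p)) (mix Wb (mSb p)) x ≤ (∑ x, p x) * E)
    {i : ℕ} (hi : i < n) (h : Fin i → Y) :
    ∑ l, ∑ u, tiltedWeight sc W Wb t mS mSb (i + 1) u (Fin.snoc h l) ≤
      E * ∑ u, tiltedWeight sc W Wb t mS mSb i u h := by
  set p := tiltedInput sc W Wb t mS mSb ⟨i, hi⟩ h
  calc ∑ l, ∑ u, tiltedWeight sc W Wb t mS mSb (i + 1) u (Fin.snoc h l)
      = ∑ u, tiltedWeight sc W Wb t mS mSb i u h *
          ∑ l, tiltFactor sc W Wb t mS mSb ⟨i, hi⟩ h u l := by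
        simp only [tiltedWeight_succ sc W Wb t mS mSb hi, Fin.init_snoc, Fin.snoc_last,
          Finset.mul_sum]
        exact Finset.sum_comm
    _ = ∑ x, p x * tiltedMass t (mix W (mS p)) (mix Wb (mSb p)) x :=
        (sum_fiber_mul (fun u => sc.enc u ⟨i, hi⟩ h)
          (fun u => tiltedWeight sc W Wb t mS mSb i u h) (tiltedMass t _ _)).symm
    _ ≤ (∑ x, p x) * E := hm p (tiltedInput_nonneg sc t hW hWb hmS hmSb ⟨i, hi⟩ h)
    _ = E * ∑ u, tiltedWeight sc W Wb t mS mSb i u h := by rw [sum_tiltedInput, mul_comm]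

theorem sum_rpow_jointProb_tilted_le (hW : ∀ x s y, 0 ≤ W x s y)
    (hWb : ∀ x s y, 0 ≤ Wb x s y) (hmS : ∀ p, IsDist (mS p)) (hmSb : ∀ p, IsDist (mSb p))
    (ht : t ≠ 1) {E : ℝ} (hE : 0 ≤ E)
    (hm : ∀ p : X → ℝ, (∀ x, 0 ≤ p x) →
      ∑ x, p x * tiltedMass t (mix W (mS p)) (mix Wb (mSb p)) x ≤ (∑ x, p x) * E) :
    ∑ u, ∑ y : Fin n → Y, jointProb sc W (tiltedAdv sc W Wb t mS mSb) u y ^ (1 - t) *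
      jointProb sc Wb (tiltedAdvBar sc W Wb t mS mSb) u y ^ t ≤ E ^ n := by
  simp only [← tiltedWeight_eq_jointProb sc t hW hWb hmS hmSb ht]
  calc ∑ u, ∑ y : Fin n → Y, tiltedWeight sc W Wb t mS mSb n u y
      = ∑ y : Fin n → Y, ∑ u, tiltedWeight sc W Wb t mS mSb n u y := Finset.sum_comm
    _ ≤ E ^ n * ∑ u, tiltedWeight sc W Wb t mS mSb 0 u Fin.elim0 :=
        sum_pi_le_pow_mul (fun i h => ∑ u, tiltedWeight sc W Wb t mS mSb i u h) hE n
          fun i hi h => sum_snoc_tiltedWeight_le sc t hW hWb hmS hmSb hm hi h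
    _ = E ^ n := by simp [tiltedWeight, sc.pU_sum]

end TiltedAdversary

theorem decisionProb_eq_sum_filter {X Y S : Type} [Fintype Y] [Fintype S] {n : ℕ}
    (sc : SRScheme X Y n) (W : X → S → Y → ℝ) (a : AdvStrat Y S n) (b : Bool) :
    decisionProb sc W a b = ∑ z ∈ Finset.univ.filter
      (fun z : sc.U × (Fin n → Y) => sc.dec z.1 (inducedInputs sc z.1 z.2) z.2 = b),
        jointProb sc W a z.1 z.2 := by
  rw [Finset.sum_filter, Fintype.sum_prod_type]
  simp only [decisionProb, mul_ite, mul_one, mul_zero]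

theorem decisionProb_le_rpow_mul_rpow {X Y S Sb : Type} [Fintype Y] [Fintype S] [Fintype Sb]
    {n : ℕ} {sc : SRScheme X Y n} {W : X → S → Y → ℝ} {Wb : X → Sb → Y → ℝ}
    {a : AdvStrat Y S n} {ab : AdvStrat Y Sb n} (hW : ∀ x s y, 0 ≤ W x s y)
    (hWbpos : ∀ x s y, 0 < Wb x s y) (ha : ValidAdv a) (hab : ValidAdv ab) {t : ℝ} (ht : t < 0)
    (b : Bool) :
    decisionProb sc W a b ≤
      (∑ u, ∑ y : Fin n → Y, jointProb sc W a u y ^ (1 - t) * jointProb sc Wb ab u y ^ t) ^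
        (1 - t)⁻¹ * decisionProb sc Wb ab b ^ (-t / (1 - t)) := by
  have hP : ∀ z : sc.U × (Fin n → Y), 0 ≤ jointProb sc W a z.1 z.2 :=
    fun z => jointProb_nonneg hW ha _ _
  have hQ : ∀ z : sc.U × (Fin n → Y), 0 ≤ jointProb sc Wb ab z.1 z.2 :=
    fun z => jointProb_nonneg (fun x s y => (hWbpos x s y).le) hab _ _
  have hPQ (z : sc.U × (Fin n → Y)) (hz : jointProb sc Wb ab z.1 z.2 = 0) :
      jointProb sc W a z.1 z.2 = 0 := by
    rw [jointProb_eq, (jointProb_eq_zero_iff hWbpos hab _ _).1 hz, zero_mul]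
  rw [decisionProb_eq_sum_filter, decisionProb_eq_sum_filter]
  refine (sum_le_rpow_mul_rpow_of_neg _ ht hP hQ hPQ).trans ?_
  have hPQ0 : ∀ z : sc.U × (Fin n → Y),
      0 ≤ jointProb sc W a z.1 z.2 ^ (1 - t) * jointProb sc Wb ab z.1 z.2 ^ t :=
    fun z => mul_nonneg (Real.rpow_nonneg (hP z) _) (Real.rpow_nonneg (hQ z) _)
  refine mul_le_mul_of_nonneg_right (Real.rpow_le_rpow (Finset.sum_nonneg fun z _ => hPQ0 z) ?_
    (inv_nonneg.2 (by linarith))) (Real.rpow_nonneg (Finset.sum_nonneg fun z _ => hQ z) _)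
  rw [← Fintype.sum_prod_type']
  exact Finset.sum_le_sum_of_subset_of_nonneg (Finset.subset_univ _) fun z _ _ => hPQ0 z

theorem one_sub_alphaSh_le {X Y S Sb : Type} [Fintype X] [Fintype Y] [Fintype S] [Fintype Sb]
    {W : X → S → Y → ℝ} {Wb : X → Sb → Y → ℝ} (hW : ∀ x s, IsDist (W x s))
    (hWb : ∀ x s, IsDist (Wb x s)) (hWbpos : ∀ x s y, 0 < Wb x s y) {t E : ℝ} (ht : t < 0)
    (hE : 0 ≤ E)
    (hsel : ∀ p : X → ℝ, ∃ pS pSb, IsDist pS ∧ IsDist pSb ∧ ((∀ x, 0 ≤ p x) →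
      ∑ x, p x * tiltedMass t (mix W pS) (mix Wb pSb) x ≤ (∑ x, p x) * E))
    {n : ℕ} (sc : SRScheme X Y n) :
    1 - alphaSh sc W ≤ (E ^ n) ^ (1 - t)⁻¹ * betaSh sc Wb ^ (-t / (1 - t)) := by
  classical
  choose mS mSb hmS hmSb hm using hsel
  have hW0 : ∀ x s y, 0 ≤ W x s y := fun x s => (hW x s).1
  have ha : ValidAdv (tiltedAdv sc W Wb t mS mSb) := fun _ _ => hmS _
  have hab : ValidAdv (tiltedAdvBar sc W Wb t mS mSb) := fun _ _ => hmSb _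
  have h1t : 0 < 1 - t := by linarith
  have hQ0 := decisionProb_nonneg (sc := sc) (fun x s => (hWb x s).1) hab false
  refine (one_sub_alphaSh_le_decisionProb hW ha).trans
    ((decisionProb_le_rpow_mul_rpow hW0 hWbpos ha hab ht false).trans ?_)
  refine mul_le_mul (Real.rpow_le_rpow ?_ ?_ (inv_nonneg.2 h1t.le))
    (Real.rpow_le_rpow hQ0 (decisionProb_le_iSup hWb hab false)
      (div_nonneg (neg_nonneg.2 ht.le) h1t.le)) (Real.rpow_nonneg hQ0 _)
    (Real.rpow_nonneg (pow_nonneg hE n) _)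
  · exact Finset.sum_nonneg fun u _ => Finset.sum_nonneg fun y _ => mul_nonneg
      (Real.rpow_nonneg (jointProb_nonneg hW0 ha u y) _)
      (Real.rpow_nonneg (jointProb_nonneg (fun x s => (hWb x s).1) hab u y) _)
  · exact sum_rpow_jointProb_tilted_le sc t hW0 (fun x s => (hWb x s).1) hmS hmSb
      (by linarith) hE hm

theorem rpow_le_tiltedMass {X Y : Type*} [Fintype Y] [Nonempty Y] {V Vb : X → Y → ℝ} {t c : ℝ}
    (ht : t ≤ 0) (hc : 0 < c) {x : X} (hV : ∀ y, c ≤ V x y) (hVb : ∀ y, 0 < Vb x y)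
    (hVb1 : ∀ y, Vb x y ≤ 1) : c ^ (1 - t) ≤ tiltedMass t V Vb x := by
  obtain ⟨y⟩ := ‹Nonempty Y›
  have hterm : ∀ y, c ^ (1 - t) ≤ V x y ^ (1 - t) * Vb x y ^ t := fun y =>
    (Real.rpow_le_rpow hc.le (hV y) (by linarith)).trans (le_mul_of_one_le_right
      (Real.rpow_nonneg (hc.le.trans (hV y)) _)
      (Real.one_le_rpow_of_pos_of_le_one_of_nonpos (hVb y) (hVb1 y) ht))
  exact (hterm y).trans (Finset.single_le_sum (fun y _ => (Real.rpow_nonneg hc.le _).trans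
    (hterm y)) (Finset.mem_univ y))

section PhiStar

variable {X Y S Sb : Type} [Fintype X] [Fintype Y] [Fintype S] [Fintype Sb]
  [Nonempty X] [Nonempty Y] [Nonempty S] [Nonempty Sb] {W : X → S → Y → ℝ} {Wb : X → Sb → Y → ℝ}

theorem exists_psiT_lt_phiStarSh (hWb : ∀ x s, IsDist (Wb x s))
    (hWpos : ∀ x s y, 0 < W x s y) (hWbpos : ∀ x s y, 0 < Wb x s y) {t η : ℝ} (ht : t < 0)
    (hη : 0 < η) {pX : X → ℝ} (hpX : IsDist pX) :
    ∃ pS pSb, IsDist pS ∧ IsDist pSb ∧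
      psiT t (mix W pS) (mix Wb pSb) pX < phiStarSh W Wb t + η := by
  let T : {p : X → ℝ // IsDist p} → Set ℝ := fun q =>
    {v | ∃ pS : S → ℝ, IsDist pS ∧ ∃ pSb : Sb → ℝ, IsDist pSb ∧
      v = psiT t (mix W pS) (mix Wb pSb) q.1}
  obtain ⟨⟨x₀, s₀, y₀⟩, hmin⟩ := Finite.exists_min fun i : X × S × Y => W i.1 i.2.1 i.2.2
  set c := W x₀ s₀ y₀
  have hc : 0 < c := hWpos _ _ _
  have hmass : ∀ (pS : S → ℝ) (pSb : Sb → ℝ), IsDist pS → IsDist pSb → ∀ x,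
      c ^ (1 - t) ≤ tiltedMass t (mix W pS) (mix Wb pSb) x := fun pS pSb hpS hpSb x =>
    rpow_le_tiltedMass ht.le hc (fun y => hpS.le_sum_mul fun s => hmin (x, s, y))
      (mix_pos hWbpos hpSb x) ((mix_isDist hWb hpSb x).le_one)
  have hpos : ∀ (q : {p : X → ℝ // IsDist p}) (pS : S → ℝ) (pSb : Sb → ℝ), IsDist pS →
      IsDist pSb → 0 < ∑ x, q.1 x * tiltedMass t (mix W pS) (mix Wb pSb) x :=
    fun q pS pSb hpS hpSb => (Real.rpow_pos_of_pos hc _).trans_le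
      (q.2.le_sum_mul (hmass pS pSb hpS hpSb))
  have hbdd : ∀ q, BddBelow (T q) := fun q => ⟨log (c ^ (1 - t)), by
    rintro v ⟨pS, hpS, pSb, hpSb, rfl⟩
    exact Real.log_le_log (Real.rpow_pos_of_pos hc _) (q.2.le_sum_mul (hmass pS pSb hpS hpSb))⟩
  have hunif : ∀ q, psiT t (mix W fun _ => (Fintype.card S : ℝ)⁻¹)
      (mix Wb fun _ => (Fintype.card Sb : ℝ)⁻¹) q.1 ∈ T q :=
    fun q => ⟨_, isDist_uniform, _, isDist_uniform, rfl⟩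
  have hsup : BddAbove (Set.range fun q => sInf (T q)) := by
    refine ⟨log (∑ x, tiltedMass t (mix W fun _ => (Fintype.card S : ℝ)⁻¹)
      (mix Wb fun _ => (Fintype.card Sb : ℝ)⁻¹) x), ?_⟩
    rintro _ ⟨q, rfl⟩
    refine (csInf_le (hbdd q) (hunif q)).trans (Real.log_le_log
      (hpos q _ _ isDist_uniform isDist_uniform) (Finset.sum_le_sum fun x _ => ?_))
    exact mul_le_of_le_one_left ((Real.rpow_nonneg hc.le _).trans
      (hmass _ _ isDist_uniform isDist_uniform x)) (q.2.le_one x)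
  obtain ⟨v, ⟨pS, hpS, pSb, hpSb, rfl⟩, hv⟩ :=
    Real.lt_sInf_add_pos ⟨_, hunif ⟨pX, hpX⟩⟩ hη
  have : sInf (T ⟨pX, hpX⟩) ≤ phiStarSh W Wb t := le_ciSup hsup ⟨pX, hpX⟩
  exact ⟨pS, pSb, hpS, hpSb, by linarith⟩

theorem exists_tiltedMass_le_exp (hWb : ∀ x s, IsDist (Wb x s))
    (hWpos : ∀ x s y, 0 < W x s y) (hWbpos : ∀ x s y, 0 < Wb x s y) {t η : ℝ} (ht : t < 0)
    (hη : 0 < η) (p : X → ℝ) :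
    ∃ pS pSb, IsDist pS ∧ IsDist pSb ∧ ((∀ x, 0 ≤ p x) →
      ∑ x, p x * tiltedMass t (mix W pS) (mix Wb pSb) x ≤
        (∑ x, p x) * exp (phiStarSh W Wb t + η)) := by
  by_cases hp : (∀ x, 0 ≤ p x) ∧ 0 < ∑ x, p x
  · obtain ⟨pS, pSb, hpS, hpSb, hψ⟩ :=
      exists_psiT_lt_phiStarSh hWb hWpos hWbpos ht hη (isDist_div_sum hp.1 hp.2)
    refine ⟨pS, pSb, hpS, hpSb, fun _ => ?_⟩
    set A := ∑ x, p x / (∑ x', p x') * tiltedMass t (mix W pS) (mix Wb pSb) x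
    have hA : A ≤ exp (phiStarSh W Wb t + η) := by
      rcases le_or_gt A 0 with hA | hA
      · exact hA.trans (Real.exp_pos _).le
      · exact (Real.exp_log hA).symm.le.trans (Real.exp_le_exp.2 hψ.le)
    calc ∑ x, p x * tiltedMass t (mix W pS) (mix Wb pSb) x = (∑ x, p x) * A := by
          rw [Finset.mul_sum]
          have := hp.2.ne'
          exact Finset.sum_congr rfl fun x _ => by field_simp
      _ ≤ _ := mul_le_mul_of_nonneg_left hA hp.2.le
  · refine ⟨_, _, isDist_uniform, isDist_uniform, fun hp0 => ?_⟩
    have hsum : ∑ x, p x = 0 :=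
      le_antisymm (not_lt.1 fun h => hp ⟨hp0, h⟩) (Finset.sum_nonneg fun x _ => hp0 x)
    have hzero : ∀ x, p x = 0 := fun x =>
      (Finset.sum_eq_zero_iff_of_nonneg fun x _ => hp0 x).1 hsum x (Finset.mem_univ x)
    simp [hzero]

end PhiStar

theorem exists_one_sub_alphaSh_le_exp {X Y S Sb : Type} [Fintype X] [Fintype Y] [Fintype S]
    [Fintype Sb] [Nonempty X] [Nonempty Y] [Nonempty S] [Nonempty Sb]
    {W : X → S → Y → ℝ} {Wb : X → Sb → Y → ℝ} (hW : ∀ x s, IsDist (W x s))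
    (hWb : ∀ x s, IsDist (Wb x s)) (hWpos : ∀ x s y, 0 < W x s y)
    (hWbpos : ∀ x s y, 0 < Wb x s y) {t B : ℝ} (ht : t < 0) (htB : phiStarSh W Wb t / -t < B) :
    ∃ c > 0, ∀ n (sc : SRScheme X Y n),
      betaSh sc Wb ≤ exp (-(n * B)) → 1 - alphaSh sc W ≤ exp (-(n * c)) := by
  set φ := phiStarSh W Wb t
  have hφ : φ + t * B < 0 := by
    have := (div_lt_iff₀ (neg_pos.2 ht)).1 htB
    linarith
  set η := -(φ + t * B) / 2 with hη_def
  have hη : 0 < η := by rw [hη_def]; linarith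
  have h1t : 0 < 1 - t := by linarith
  refine ⟨η / (1 - t), div_pos hη h1t, fun n sc hβ => ?_⟩
  calc 1 - alphaSh sc W ≤ (exp (φ + η) ^ n) ^ (1 - t)⁻¹ * betaSh sc Wb ^ (-t / (1 - t)) :=
        one_sub_alphaSh_le hW hWb hWbpos ht (exp_pos _).le
          (exists_tiltedMass_le_exp hWb hWpos hWbpos ht hη) sc
    _ ≤ (exp (φ + η) ^ n) ^ (1 - t)⁻¹ * exp (-(n * B)) ^ (-t / (1 - t)) := by
        gcongr
        · exact betaSh_nonneg hWb
        · exact div_nonneg (neg_nonneg.2 ht.le) h1t.le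
    _ = exp (-(n * (η / (1 - t)))) := by
        rw [← Real.exp_nat_mul, ← Real.exp_mul, ← Real.exp_mul, ← Real.exp_add]
        congr 1
        field_simp
        ring

noncomputable def decayRate (a : ℕ → ℝ) (n : ℕ) : ℝ :=
  -(1 / (n : ℝ)) * log (a n)

theorem le_decayRate_iff {a : ℕ → ℝ} {n : ℕ} {c : ℝ} (hn : 0 < n) (ha : 0 < a n) :
    c ≤ decayRate a n ↔ a n ≤ exp (-(n * c)) := by
  have hn' : (0 : ℝ) < n := Nat.cast_pos.2 hn
  rw [← Real.log_le_iff_le_exp ha, decayRate, neg_mul, one_div, inv_mul_eq_div,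
    le_neg, div_le_iff₀ hn', neg_mul, mul_comm]

theorem isCoboundedUnder_ge_of_liminf_ne_zero {ι : Type*} {f : Filter ι} {u : ι → ℝ}
    (h : liminf u f ≠ 0) : IsCoboundedUnder (· ≥ ·) f u := by
  by_contra hu
  exact h (by rw [liminf_eq]; exact Real.sSup_of_not_bddAbove hu)

theorem liminf_decayRate_pos {a b : ℕ → ℝ} {ρ B c : ℝ} (hρ : 0 < ρ) (hB : 0 < B) (hc : 0 < c)
    (hb0 : ∀ n, 0 ≤ b n) (hb1 : ∀ n, b n ≤ 1) (hba : ∀ n, ρ ^ n * b n ≤ a n)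
    (hβ : B < liminf (decayRate b) atTop)
    (hab : ∀ n, b n ≤ exp (-(n * B)) → a n ≤ exp (-(n * c))) :
    0 < liminf (decayRate a) atTop := by
  have hbdd : IsBoundedUnder (· ≥ ·) atTop (decayRate b) := isBoundedUnder_of ⟨0, fun n =>
    mul_nonneg_of_nonpos_of_nonpos (by simp) (Real.log_nonpos (hb0 n) (hb1 n))⟩
  have hev : ∀ᶠ n in atTop, 0 < n ∧ B < decayRate b n :=
    (eventually_gt_atTop 0).and (eventually_lt_of_lt_liminf hβ hbdd)
  have hbpos : ∀ n, B < decayRate b n → 0 < b n := fun n hn =>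
    (hb0 n).lt_of_ne fun h => by simp [decayRate, ← h] at hn; linarith
  have hapos : ∀ n, B < decayRate b n → 0 < a n := fun n hn =>
    (mul_pos (pow_pos hρ n) (hbpos n hn)).trans_le (hba n)
  have hrate : ∀ n, 0 < n → B < decayRate b n → decayRate a n ≤ -log ρ + decayRate b n :=
    fun n hn hBn => by
      have hn' : (0 : ℝ) < n := Nat.cast_pos.2 hn
      have := Real.log_le_log (mul_pos (pow_pos hρ n) (hbpos n hBn)) (hba n)
      rw [Real.log_mul (pow_pos hρ n).ne' (hbpos n hBn).ne', Real.log_pow] at this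
      simp only [decayRate]
      field_simp
      nlinarith
  obtain ⟨K, hK⟩ := (isCoboundedUnder_ge_of_liminf_ne_zero (hB.trans hβ).ne').frequently_le
  have hcob : IsCoboundedUnder (· ≥ ·) atTop (decayRate a) :=
    IsCoboundedUnder.of_frequently_le (a := -log ρ + K) ((hK.and_eventually hev).mono
      fun n ⟨hnK, hn, hBn⟩ => (hrate n hn hBn).trans (by linarith))
  refine hc.trans_le (le_liminf_of_le hcob (hev.mono fun n ⟨hn, hBn⟩ => ?_))
  exact (le_decayRate_iff hn (hapos n hBn)).2
    (hab n (((le_decayRate_iff hn (hbpos n hBn)).1 hBn.le)))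

/-- Strong converse with shared randomness: assuming the minimax-limit exchange
`lim_{t→0⁻} φ*_sh(t)/(-t) = D*_sh`, any sequence of shared-randomness schemes whose
type-2 errors decay with exponent exceeding `D*_sh` must have its probability of correct
decision under `H0` decay exponentially. -/
theorem shared_randomness_strong_converse
    {X Y S Sb : Type} [Fintype X] [Fintype Y] [Fintype S] [Fintype Sb]
    [Nonempty X] [Nonempty Y] [Nonempty S] [Nonempty Sb]
    (W : X → S → Y → ℝ) (Wb : X → Sb → Y → ℝ)
    (hW : ∀ x s, IsDist (W x s)) (hWb : ∀ x s, IsDist (Wb x s))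
    (hWpos : ∀ x s y, 0 < W x s y) (hWbpos : ∀ x s y, 0 < Wb x s y)
    (hExchange :
      Filter.Tendsto (fun t : ℝ => phiStarSh W Wb t / (-t))
        (nhdsWithin 0 (Set.Iio (0:ℝ))) (nhds (Dsh W Wb)))
    (sc : (n : ℕ) → SRScheme X Y n)
    (hβ : Dsh W Wb <
      Filter.liminf (fun n : ℕ => -(1/(n:ℝ)) * Real.log (betaSh (sc n) Wb))
        Filter.atTop) :
    0 < Filter.liminf (fun n : ℕ => -(1/(n:ℝ)) * Real.log (1 - alphaSh (sc n) W))
        Filter.atTop := by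
  obtain ⟨ρ, hρ, hρβ⟩ := exists_pow_mul_betaSh_le_one_sub_alphaSh hW hWpos hWbpos
  obtain ⟨B, hDB, hB⟩ := exists_between hβ
  obtain ⟨t, htB, ht⟩ :=
    ((hExchange.eventually (gt_mem_nhds hDB)).and self_mem_nhdsWithin).exists
  obtain ⟨c, hc, hrate⟩ := exists_one_sub_alphaSh_le_exp hW hWb hWpos hWbpos ht htB
  exact liminf_decayRate_pos (b := fun n => betaSh (sc n) Wb) hρ
    ((Dsh_nonneg hW hWb hWbpos).trans_lt hDB) hc (fun n => betaSh_nonneg hWb)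
    (fun n => betaSh_le_one hWb) (fun n => hρβ n (sc n)) hB fun n => hrate n (sc n)
end

section
/- Private-randomness converse (Theorem: pvt_rand, impossibility part): If the pair (W,W̄) is trans-symmetrizable, then the Chernoff–Stein exponent with a privately randomized transmitter is zero: for every ε ∈ (0,1/2), E^ε_pvt(W,W̄) = 0. This holds even when both the transmitter and the adversary are adaptive. -/
open Finset

/-- Mutual information `I(A;B)` of a joint pmf on `A × B`. -/
noncomputable def mi {A B : Type*} [Fintype A] [Fintype B] (p : A × B → ℝ) : ℝ :=
  ∑ a, ∑ b, p (a, b) * Real.log (p (a, b) / ((∑ b', p (a, b')) * (∑ a', p (a', b))))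

/-- Conditional mutual information `I(A;B|C)` of a joint pmf on `A × B × C`. -/
noncomputable def cmi {A B C : Type*} [Fintype A] [Fintype B] [Fintype C]
    (p : A × B × C → ℝ) : ℝ :=
  ∑ a, ∑ b, ∑ c,
    p (a, b, c) * Real.log ((∑ a', ∑ b', p (a', b', c)) * p (a, b, c) /
      ((∑ b', p (a, b', c)) * (∑ a', p (a', b, c))))

/-- The divergence `D(P_{X S Y} ‖ P_{X S} × W)` for a joint pmf `p` on `X × S × Y` and a
channel `W`. -/
noncomputable def condDivW {X S Y : Type*} [Fintype X] [Fintype S] [Fintype Y]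
    (p : X × S × Y → ℝ) (W : X → S → Y → ℝ) : ℝ :=
  ∑ x, ∑ s, ∑ y,
    p (x, s, y) * Real.log (p (x, s, y) / ((∑ y', p (x, s, y')) * W x s y))

/-- `(W, W̄)` is trans-symmetrizable. -/
def TransSym {X Y S Sb : Type*} [Fintype S] [Fintype Sb]
    (W : X → S → Y → ℝ) (Wb : X → Sb → Y → ℝ) : Prop :=
  ∃ (pS : X → S → ℝ) (pSb : X → Sb → ℝ),
    (∀ x, IsDist (pS x)) ∧ (∀ x, IsDist (pSb x)) ∧
    ∀ x x' y, ∑ s, pS x' s * W x s y = ∑ sb, pSb x sb * Wb x' sb y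

section Joint
variable {X S Sb Y : Type*} [Fintype X] [Fintype S] [Fintype Sb] [Fintype Y]

/-- Marginal of `J` on `(X, S̄)`. -/
noncomputable def mXSb (J : X × X × Sb × S × Y → ℝ) : X × Sb → ℝ :=
  fun q => ∑ x', ∑ s, ∑ y, J (q.1, x', q.2, s, y)

/-- Marginal of `J` on `(X', S)`. -/
noncomputable def mXpS (J : X × X × Sb × S × Y → ℝ) : X × S → ℝ :=
  fun q => ∑ x, ∑ sb, ∑ y, J (x, q.1, sb, q.2, y)

/-- Marginal of `J` on `(X, S̄, Y)`. -/
noncomputable def mXSbY (J : X × X × Sb × S × Y → ℝ) : X × Sb × Y → ℝ :=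
  fun q => ∑ x', ∑ s, J (q.1, x', q.2.1, s, q.2.2)

/-- Marginal of `J` on `(X', S, Y)`. -/
noncomputable def mXpSY (J : X × X × Sb × S × Y → ℝ) : X × S × Y → ℝ :=
  fun q => ∑ x, ∑ sb, J (x, q.1, sb, q.2.1, q.2.2)

/-- The pmf of `(X', (X,Y), S̄)`, used for `I(X'; XY | S̄)`. -/
noncomputable def jXpXYSb (J : X × X × Sb × S × Y → ℝ) : X × (X × Y) × Sb → ℝ :=
  fun q => ∑ s, J (q.2.1.1, q.1, q.2.2, s, q.2.1.2)

/-- The pmf of `(X, (X',Y), S)`, used for `I(X; X'Y | S)`. -/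
noncomputable def jXXpYS (J : X × X × Sb × S × Y → ℝ) : X × (X × Y) × S → ℝ :=
  fun q => ∑ sb, J (q.1, q.2.1.1, sb, q.2.2, q.2.1.2)

/-- `Pr[X ≠ X']` under `J`. -/
noncomputable def probNe [DecidableEq X] (J : X × X × Sb × S × Y → ℝ) : ℝ :=
  ∑ z ∈ univ.filter (fun z : X × X × Sb × S × Y => z.1 ≠ z.2.1), J z

/-- The forbidden condition in the definition of `η(P)`: the joint pmf
`J = P_{X X' S̄ S Y}` has both `X`- and `X'`-marginals equal to `P` and satisfies
`I(X;S̄) < η₁`, `D(P_{XS̄Y}‖P_{XS̄}×W̄) < η₂`, `I(X';S) < δ`, `D(P_{X'SY}‖P_{X'S}×W) < δ`,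
and, in case `P(X ≠ X') > 0`, additionally `I(X';XY|S̄) < η₃` and `I(X;X'Y|S) < δ`. -/
def BadJoint [DecidableEq X] (W : X → S → Y → ℝ) (Wb : X → Sb → Y → ℝ)
    (η₁ η₂ η₃ δ : ℝ) (P : X → ℝ) (J : X × X × Sb × S × Y → ℝ) : Prop :=
  IsDist J ∧
  (∀ x, (∑ x', ∑ sb, ∑ s, ∑ y, J (x, x', sb, s, y)) = P x) ∧
  (∀ x', (∑ x, ∑ sb, ∑ s, ∑ y, J (x, x', sb, s, y)) = P x') ∧
  mi (mXSb J) < η₁ ∧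
  condDivW (mXSbY J) Wb < η₂ ∧
  mi (mXpS J) < δ ∧
  condDivW (mXpSY J) W < δ ∧
  (0 < probNe J → cmi (jXpXYSb J) < η₃ ∧ cmi (jXXpYS J) < δ)

/-- `(η₁,η₂,η₃) ∈ η(P)`. -/
def etaMem [DecidableEq X] (W : X → S → Y → ℝ) (Wb : X → Sb → Y → ℝ)
    (P : X → ℝ) (η₁ η₂ η₃ : ℝ) : Prop :=
  ∃ δ > (0:ℝ), ∀ J : X × X × Sb × S × Y → ℝ, ¬ BadJoint W Wb η₁ η₂ η₃ δ P J

end Joint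

section Private
variable {X Y S : Type*} [Fintype X] [Fintype Y] [Fintype S]

/-- Output probability of `y^n` when the transmitter picks the input word using its private
randomness according to `μX` and the adversary picks the state word according to `ν`. -/
noncomputable def outProbPvt {n : ℕ} (W : X → S → Y → ℝ)
    (μX : (Fin n → X) → ℝ) (ν : (Fin n → S) → ℝ) (y : Fin n → Y) : ℝ :=
  ∑ xs : Fin n → X, ∑ sv : Fin n → S, μX xs * ν sv * ∏ i : Fin n, W (xs i) (sv i) (y i)

/-- Worst-case type-1 error of the private-randomness scheme `(μX, dec)`
(`dec y = true` means deciding `H1`). -/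
noncomputable def alphaPvt {n : ℕ} (W : X → S → Y → ℝ)
    (μX : (Fin n → X) → ℝ) (dec : (Fin n → Y) → Bool) : ℝ :=
  ⨆ ν : {ν : (Fin n → S) → ℝ // IsDist ν},
    ∑ y : Fin n → Y, outProbPvt W μX ν.1 y * (if dec y = true then 1 else 0)

/-- Worst-case type-2 error of the private-randomness scheme `(μX, dec)`. -/
noncomputable def betaPvt {n : ℕ} (W : X → S → Y → ℝ)
    (μX : (Fin n → X) → ℝ) (dec : (Fin n → Y) → Bool) : ℝ :=
  ⨆ ν : {ν : (Fin n → S) → ℝ // IsDist ν},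
    ∑ y : Fin n → Y, outProbPvt W μX ν.1 y * (if dec y = false then 1 else 0)

end Private

/-- `β_n^ε` with a privately randomized transmitter. -/
noncomputable def betaOptPvt {X Y S Sb : Type*} [Fintype X] [Fintype Y] [Fintype S]
    [Fintype Sb] (W : X → S → Y → ℝ) (Wb : X → Sb → Y → ℝ) (n : ℕ) (ε : ℝ) : ℝ :=
  sInf {b | ∃ μX : (Fin n → X) → ℝ, IsDist μX ∧ ∃ dec : (Fin n → Y) → Bool,
    alphaPvt W μX dec ≤ ε ∧ b = betaPvt Wb μX dec}

/-- The Chernoff–Stein exponent with a privately randomized transmitter. -/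
noncomputable def Epvt {X Y S Sb : Type*} [Fintype X] [Fintype Y] [Fintype S] [Fintype Sb]
    (W : X → S → Y → ℝ) (Wb : X → Sb → Y → ℝ) (ε : ℝ) : ℝ :=
  Filter.liminf (fun n : ℕ => -(1/(n:ℝ)) * Real.log (betaOptPvt W Wb n ε)) Filter.atTop

/-!
Trans-symmetrizability lets each adversary simulate the other hypothesis. Whatever the
input distribution `μ`, an adversary may draw a fake input word `x'` from `μ` independently of
the true one and feed it letterwise through `P_{S|X}` (under `H0`) or `P_{S̄|X}` (under `H1`).
Averaged over the pair `(x, x')` of i.i.d. words, the symmetrization identity with the roles of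
`x` and `x'` exchanged makes the two output laws of `Y^n` coincide. The detector then faces the
same law under both hypotheses, so `α_n + β_n ≥ 1`, hence `β_n^ε ≥ 1 - ε` for every `n`, and the
exponent `-(1/n) log β_n^ε` tends to `0`.
-/

open Filter Topology

lemma IsDist.sum_mul_ite_le_one {Z : Type*} [Fintype Z] {p : Z → ℝ} (hp : IsDist p)
    (c : Z → Prop) [DecidablePred c] : ∑ z, p z * (if c z then 1 else 0) ≤ 1 :=
  calc ∑ z, p z * (if c z then 1 else 0) ≤ ∑ z, p z :=
        sum_le_sum fun z _ => by split_ifs <;> simp [hp.1 z]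
    _ = 1 := hp.2

lemma isDist_ite_eq {Z : Type*} [Fintype Z] [DecidableEq Z] (z₀ : Z) :
    IsDist (fun z => if z = z₀ then (1 : ℝ) else 0) :=
  ⟨fun z => by dsimp only; split_ifs <;> norm_num, by simp⟩

lemma sum_pi_prod_eq_one {n : ℕ} {Z : Type*} [Fintype Z] {q : Fin n → Z → ℝ}
    (hq : ∀ i, ∑ z, q i z = 1) : ∑ z : Fin n → Z, ∏ i, q i (z i) = 1 := by
  rw [← Fintype.prod_sum]
  simp [hq]

section Simulation

variable {X Y S : Type*} [Fintype X] [Fintype S] {n : ℕ}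

lemma isDist_outProbPvt [Fintype Y] {W : X → S → Y → ℝ} (hW : ∀ x s, IsDist (W x s))
    {μ : (Fin n → X) → ℝ} (hμ : IsDist μ) {ν : (Fin n → S) → ℝ} (hν : IsDist ν) :
    IsDist (outProbPvt W μ ν) := by
  refine ⟨fun y => sum_nonneg fun xs _ => sum_nonneg fun sv _ =>
    mul_nonneg (mul_nonneg (hμ.1 xs) (hν.1 sv)) (prod_nonneg fun i _ => (hW _ _).1 _), ?_⟩
  calc ∑ y, outProbPvt W μ ν y
      = ∑ xs, ∑ sv, μ xs * ν sv * ∑ y : Fin n → Y, ∏ i, W (xs i) (sv i) (y i) := by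
        simp only [outProbPvt, mul_sum]
        rw [sum_comm]
        exact sum_congr rfl fun _ _ => sum_comm
    _ = (∑ xs, μ xs) * ∑ sv, ν sv := by
        simp [sum_pi_prod_eq_one fun i => (hW _ _).2, sum_mul_sum]
    _ = 1 := by rw [hμ.2, hν.2, one_mul]

noncomputable def simulatedStates (p : X → S → ℝ) (μ : (Fin n → X) → ℝ) : (Fin n → S) → ℝ :=
  fun sv => ∑ x', μ x' * ∏ i, p (x' i) (sv i)

lemma isDist_simulatedStates {p : X → S → ℝ} (hp : ∀ x, IsDist (p x))
    {μ : (Fin n → X) → ℝ} (hμ : IsDist μ) : IsDist (simulatedStates p μ) := by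
  refine ⟨fun sv => sum_nonneg fun x' _ =>
    mul_nonneg (hμ.1 x') (prod_nonneg fun i _ => (hp _).1 _), ?_⟩
  simp only [simulatedStates]
  rw [sum_comm]
  simp [← mul_sum, sum_pi_prod_eq_one fun i => (hp _).2, hμ.2]

lemma outProbPvt_simulatedStates (V : X → S → Y → ℝ) (p : X → S → ℝ)
    (μ : (Fin n → X) → ℝ) (y : Fin n → Y) :
    outProbPvt V μ (simulatedStates p μ) y
      = ∑ xs, ∑ x', μ xs * μ x' * ∏ i, mix V (p (x' i)) (xs i) (y i) := by
  simp only [outProbPvt, simulatedStates, mix]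
  refine sum_congr rfl fun xs _ => ?_
  simp only [Fintype.prod_sum, mul_sum, sum_mul]
  rw [sum_comm]
  refine sum_congr rfl fun x' _ => sum_congr rfl fun sv _ => ?_
  rw [prod_mul_distrib]
  ring

lemma exists_outProbPvt_eq {Sb : Type*} [Fintype Sb] {W : X → S → Y → ℝ}
    {Wb : X → Sb → Y → ℝ} (hSym : TransSym W Wb) {μ : (Fin n → X) → ℝ} (hμ : IsDist μ) :
    ∃ ν νb, IsDist ν ∧ IsDist νb ∧ outProbPvt W μ ν = outProbPvt Wb μ νb := by
  obtain ⟨pS, pSb, hpS, hpSb, hsym⟩ := hSym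
  refine ⟨simulatedStates pS μ, simulatedStates pSb μ, isDist_simulatedStates hpS hμ,
    isDist_simulatedStates hpSb hμ, funext fun y => ?_⟩
  rw [outProbPvt_simulatedStates, outProbPvt_simulatedStates, sum_comm]
  refine sum_congr rfl fun x' _ => sum_congr rfl fun xs _ => ?_
  simp only [mix, hsym, mul_comm (μ xs)]

end Simulation

section Detection

variable {X Y S Sb : Type*} [Fintype X] [Fintype Y] [Fintype S] [Fintype Sb] {n : ℕ}

lemma bddAbove_range_detectionProb {W : X → S → Y → ℝ} (hW : ∀ x s, IsDist (W x s))
    {μ : (Fin n → X) → ℝ} (hμ : IsDist μ) (dec : (Fin n → Y) → Bool) (b : Bool) :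
    BddAbove (Set.range fun ν : {ν : (Fin n → S) → ℝ // IsDist ν} =>
      ∑ y, outProbPvt W μ ν.1 y * (if dec y = b then 1 else 0)) :=
  ⟨1, by rintro _ ⟨ν, rfl⟩; exact (isDist_outProbPvt hW hμ ν.2).sum_mul_ite_le_one _⟩

lemma betaPvt_le_one {Wb : X → Sb → Y → ℝ} (hWb : ∀ x s, IsDist (Wb x s))
    {μ : (Fin n → X) → ℝ} (hμ : IsDist μ) (dec : (Fin n → Y) → Bool) :
    betaPvt Wb μ dec ≤ 1 :=
  Real.iSup_le (fun ν => (isDist_outProbPvt hWb hμ ν.2).sum_mul_ite_le_one _) zero_le_one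

lemma alphaPvt_const_false (W : X → S → Y → ℝ) (μ : (Fin n → X) → ℝ) :
    alphaPvt W μ (fun _ => false) = 0 := by
  simp [alphaPvt]

lemma one_le_alphaPvt_add_betaPvt {W : X → S → Y → ℝ} {Wb : X → Sb → Y → ℝ}
    (hW : ∀ x s, IsDist (W x s)) (hWb : ∀ x s, IsDist (Wb x s)) (hSym : TransSym W Wb)
    {μ : (Fin n → X) → ℝ} (hμ : IsDist μ) (dec : (Fin n → Y) → Bool) :
    1 ≤ alphaPvt W μ dec + betaPvt Wb μ dec := by
  obtain ⟨ν, νb, hν, hνb, heq⟩ := exists_outProbPvt_eq hSym hμ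
  have hα := le_ciSup (bddAbove_range_detectionProb hW hμ dec true) ⟨ν, hν⟩
  have hβ := le_ciSup (bddAbove_range_detectionProb hWb hμ dec false) ⟨νb, hνb⟩
  have htotal : ∑ y, outProbPvt W μ ν y * (if dec y = true then 1 else 0)
      + ∑ y, outProbPvt Wb μ νb y * (if dec y = false then 1 else 0) = 1 := by
    rw [← sum_add_distrib, heq]
    refine (sum_congr rfl fun y _ => ?_).trans (isDist_outProbPvt hWb hμ hνb).2
    cases dec y <;> simp
  unfold alphaPvt betaPvt
  linarith

lemma betaOptPvt_mem_Icc [Nonempty X] {W : X → S → Y → ℝ} {Wb : X → Sb → Y → ℝ}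
    (hW : ∀ x s, IsDist (W x s)) (hWb : ∀ x s, IsDist (Wb x s)) (hSym : TransSym W Wb)
    {ε : ℝ} (hε : 0 ≤ ε) (n : ℕ) : betaOptPvt W Wb n ε ∈ Set.Icc (1 - ε) 1 := by
  classical
  have hpoint := isDist_ite_eq (fun _ : Fin n => Classical.arbitrary X)
  have htrivial : betaPvt Wb _ (fun _ => false) ∈ {b | ∃ μX : (Fin n → X) → ℝ, IsDist μX ∧
      ∃ dec : (Fin n → Y) → Bool, alphaPvt W μX dec ≤ ε ∧ b = betaPvt Wb μX dec} :=
    ⟨_, hpoint, _, (alphaPvt_const_false W _).trans_le hε, rfl⟩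
  have hlower : ∀ b ∈ {b | ∃ μX : (Fin n → X) → ℝ, IsDist μX ∧
      ∃ dec : (Fin n → Y) → Bool, alphaPvt W μX dec ≤ ε ∧ b = betaPvt Wb μX dec}, 1 - ε ≤ b := by
    rintro _ ⟨μ, hμ, dec, hα, rfl⟩
    linarith [one_le_alphaPvt_add_betaPvt hW hWb hSym hμ dec]
  exact ⟨le_csInf ⟨_, htrivial⟩ hlower,
    (csInf_le ⟨_, hlower⟩ htrivial).trans (betaPvt_le_one hWb hpoint _)⟩

end Detection

lemma tendsto_neg_one_div_mul_log_of_mem_Icc {b : ℕ → ℝ} {c : ℝ} (hc : 0 < c)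
    (hb : ∀ n, b n ∈ Set.Icc c 1) :
    Tendsto (fun n : ℕ => -(1 / (n : ℝ)) * Real.log (b n)) atTop (𝓝 0) := by
  have hbound : ∀ n, ‖Real.log (b n)‖ ≤ -Real.log c := fun n => by
    rw [Real.norm_eq_abs, abs_of_nonpos (Real.log_nonpos (hc.le.trans (hb n).1) (hb n).2)]
    exact neg_le_neg (Real.log_le_log hc (hb n).1)
  have hinv : Tendsto (fun n : ℕ => -(1 / (n : ℝ))) atTop (𝓝 0) := by
    simpa only [neg_zero] using (tendsto_one_div_atTop_nhds_zero_nat (𝕜 := ℝ)).neg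
  exact hinv.zero_mul_isBoundedUnder_le (isBoundedUnder_of ⟨_, hbound⟩)

theorem private_randomness_converse_general
    {X Y S Sb : Type} [Fintype X] [Fintype Y] [Fintype S] [Fintype Sb]
    [Nonempty X]
    (W : X → S → Y → ℝ) (Wb : X → Sb → Y → ℝ)
    (hW : ∀ x s, IsDist (W x s)) (hWb : ∀ x s, IsDist (Wb x s))
    (hSym : TransSym W Wb)
    (ε : ℝ) (hε : ε ∈ Set.Ioo (0:ℝ) (1/2)) :
    Epvt W Wb ε = 0 :=
  (tendsto_neg_one_div_mul_log_of_mem_Icc (by linarith [hε.2])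
    (betaOptPvt_mem_Icc hW hWb hSym hε.1.le)).liminf_eq

/-- Private-randomness converse: if `(W,W̄)` is trans-symmetrizable then the
Chernoff–Stein exponent with a privately randomized transmitter is zero for every
`ε ∈ (0, 1/2)`. -/
theorem private_randomness_converse
    {X Y S Sb : Type} [Fintype X] [Fintype Y] [Fintype S] [Fintype Sb]
    [Nonempty X] [Nonempty Y] [Nonempty S] [Nonempty Sb]
    (W : X → S → Y → ℝ) (Wb : X → Sb → Y → ℝ)
    (hW : ∀ x s, IsDist (W x s)) (hWb : ∀ x s, IsDist (Wb x s))
    (hSym : TransSym W Wb)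
    (ε : ℝ) (hε : ε ∈ Set.Ioo (0:ℝ) (1/2)) :
    Epvt W Wb ε = 0 :=
  private_randomness_converse_general W Wb hW hWb hSym ε hε
end
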